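/- arXiv:2005.07495 — 8 statements merged into one kernel-verified Lean document; each statement's English description precedes it below -/
import Mathlib

section
/- Let d ≥ 1 and let P be a finite nonempty set of points in the d-dimensional Euclidean space EuclideanSpace ℝ (Fin d). Let closedBall(c, r) be a smallest enclosing ball of P. Then there exists a subset Q ⊆ P with Q of cardinality at most d + 1 such that every point of Q lies on the boundary sphere (i.e. dist(q, c) = r for all q ∈ Q) and c lies in the convex hull of Q. In particular, c lies in the convex hull of P. -/
open Metric

/-- `closedBall c r` is a smallest enclosing ball of `P`: it contains `P` and every
closed ball containing `P` has radius at least `r`. -/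
def IsSEB {E : Type*} [NormedAddCommGroup E] [InnerProductSpace ℝ E]
    (P : Set E) (c : E) (r : ℝ) : Prop :=
  P ⊆ closedBall c r ∧ ∀ c' r', P ⊆ closedBall c' r' → r ≤ r'

/-!
If `c` were not in the convex hull of the points of `P` on the sphere, a separating functional,
represented by a vector `v`, would have positive inner product with `p - c` for every such `p`.
Moving the centre slightly in direction `v` then strictly decreases the distance to these points,
while the remaining points of `P` stay strictly inside the ball by continuity; as `P` is finite,
a strictly smaller ball would contain `P`. Carathéodory's theorem then cuts the touching points
down to an affinely independent subset, of size at most `d + 1`.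
-/

open Filter Topology

lemma norm_sub_smul_lt_of_inner_pos {E : Type*} [NormedAddCommGroup E] [InnerProductSpace ℝ E]
    {x v : E} (h : 0 < inner ℝ x v) :
    ∀ᶠ t in 𝓝[>] (0 : ℝ), ‖x - t • v‖ < ‖x‖ := by
  have hsmall : ∀ᶠ t in 𝓝 (0 : ℝ), t * ‖v‖ ^ 2 < 2 * inner ℝ x v :=
    ((continuous_id.mul continuous_const).tendsto' 0 0 (by simp)).eventually_lt_const
      (by linarith)
  filter_upwards [self_mem_nhdsWithin, nhdsWithin_le_nhds hsmall] with t (ht : 0 < t) hts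
  refine lt_of_pow_lt_pow_left₀ 2 (norm_nonneg x) ?_
  rw [norm_sub_sq_real, real_inner_smul_right, norm_smul, Real.norm_eq_abs, abs_of_pos ht]
  nlinarith

section IsSEB

variable {E : Type*} [NormedAddCommGroup E] [InnerProductSpace ℝ E]
  {P : Finset E} {c : E} {r : ℝ}

lemma IsSEB.nonempty (h : IsSEB (↑P) c r) : P.Nonempty := by
  by_contra hP
  rw [Finset.not_nonempty_iff_eq_empty] at hP
  have := h.2 c (r - 1) (by simp [hP])
  linarith

lemma IsSEB.dist_le (h : IsSEB (↑P) c r) {p : E} (hp : p ∈ P) : dist p c ≤ r :=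
  mem_closedBall.1 (h.1 hp)

lemma IsSEB.exists_le_dist (h : IsSEB (↑P) c r) (c' : E) : ∃ p ∈ P, r ≤ dist p c' := by
  obtain ⟨p, hp, hmax⟩ := P.exists_max_image (dist · c') h.nonempty
  exact ⟨p, hp, h.2 c' _ fun q hq => mem_closedBall.2 (hmax q hq)⟩

lemma IsSEB.center_mem_convexHull_sphere [CompleteSpace E] (h : IsSEB (↑P) c r) :
    c ∈ convexHull ℝ (↑{p ∈ P | dist p c = r} : Set E) := by
  classical
  by_contra hc
  obtain ⟨f, u, hfc, hfS⟩ := geometric_hahn_banach_point_closed (convex_convexHull ℝ _)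
    ((Finset.finite_toSet _).isClosed_convexHull (𝕜 := ℝ)) hc
  set v := (InnerProductSpace.toDual ℝ E).symm f
  have hmove : ∀ p ∈ P, ∀ᶠ t in 𝓝[>] (0 : ℝ), dist p (c + t • v) < r := by
    intro p hp
    rcases (h.dist_le hp).lt_or_eq with hlt | heq
    · have hcont : Continuous fun t : ℝ => dist p (c + t • v) := by fun_prop
      exact nhdsWithin_le_nhds <| (hcont.tendsto' 0 _ (by simp)).eventually_lt_const hlt
    · have hinner : 0 < inner ℝ (p - c) v := by
        have := hfS p (subset_convexHull ℝ _ (by simp [hp, heq]))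
        rw [real_inner_comm, InnerProductSpace.toDual_symm_apply, map_sub]
        linarith
      filter_upwards [norm_sub_smul_lt_of_inner_pos hinner] with t ht
      rwa [sub_sub, ← dist_eq_norm, ← dist_eq_norm, heq] at ht
  obtain ⟨t, ht⟩ := ((Filter.eventually_all_finset P).2 hmove).exists
  obtain ⟨p, hp, hle⟩ := h.exists_le_dist (c + t • v)
  exact (ht p hp).not_ge hle

end IsSEB

lemma exists_finset_card_le_finrank_succ_of_mem_convexHull {E : Type*} [AddCommGroup E]
    [Module ℝ E] [FiniteDimensional ℝ E] {s : Finset E} {x : E}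
    (hx : x ∈ convexHull ℝ (↑s : Set E)) :
    ∃ t ⊆ s, t.card ≤ Module.finrank ℝ E + 1 ∧ x ∈ convexHull ℝ (↑t : Set E) := by
  rw [convexHull_eq_union] at hx
  simp only [Set.mem_iUnion] at hx
  obtain ⟨t, hts, hind, hxt⟩ := hx
  refine ⟨t, Finset.coe_subset.1 hts, ?_, hxt⟩
  have := hind.card_le_finrank_succ
  rw [Fintype.card_coe] at this
  exact this.trans (Nat.succ_le_succ (Submodule.finrank_le _))

theorem stmt0_general (d : ℕ) (P : Finset (EuclideanSpace ℝ (Fin d)))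
    (c : EuclideanSpace ℝ (Fin d)) (r : ℝ)
    (hSEB : IsSEB (↑P) c r) :
    ∃ Q : Finset (EuclideanSpace ℝ (Fin d)), Q ⊆ P ∧ Q.card ≤ d + 1 ∧
      (∀ q ∈ Q, dist q c = r) ∧ c ∈ convexHull ℝ (↑Q : Set (EuclideanSpace ℝ (Fin d))) ∧
      c ∈ convexHull ℝ (↑P : Set (EuclideanSpace ℝ (Fin d))) := by
  have hc := hSEB.center_mem_convexHull_sphere
  obtain ⟨Q, hQ, hcard, hcQ⟩ := exists_finset_card_le_finrank_succ_of_mem_convexHull hc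
  rw [finrank_euclideanSpace_fin] at hcard
  refine ⟨Q, hQ.trans (Finset.filter_subset _ _), hcard,
    fun q hq => (Finset.mem_filter.1 (hQ hq)).2, hcQ, convexHull_mono ?_ hc⟩
  exact_mod_cast Finset.filter_subset _ P

theorem stmt0 (d : ℕ) (hd : 1 ≤ d) (P : Finset (EuclideanSpace ℝ (Fin d)))
    (hP : P.Nonempty) (c : EuclideanSpace ℝ (Fin d)) (r : ℝ)
    (hSEB : IsSEB (↑P) c r) :
    ∃ Q : Finset (EuclideanSpace ℝ (Fin d)), Q ⊆ P ∧ Q.card ≤ d + 1 ∧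
      (∀ q ∈ Q, dist q c = r) ∧ c ∈ convexHull ℝ (↑Q : Set (EuclideanSpace ℝ (Fin d))) ∧
      c ∈ convexHull ℝ (↑P : Set (EuclideanSpace ℝ (Fin d))) :=
  stmt0_general d P c r hSEB
end

section
/- Let P be a finite set of at least 2 points in EuclideanSpace ℝ (Fin 3) and let closedBall(c, r) be a smallest enclosing ball of P (so r > 0). Then the boundary sphere has no point-free cap of height exceeding r; concretely, for every unit vector u there exists a point p ∈ P with dist(p, c) = r and ⟪u, p − c⟫ ≥ 0. -/
open Metric
open scoped RealInnerProductSpace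

theorem stmt2 (P : Finset (EuclideanSpace ℝ (Fin 3))) (hP : 2 ≤ P.card)
    (c : EuclideanSpace ℝ (Fin 3)) (r : ℝ) (hSEB : IsSEB (↑P) c r) :
    0 < r ∧ ∀ u : EuclideanSpace ℝ (Fin 3), ‖u‖ = 1 →
      ∃ p ∈ P, dist p c = r ∧ 0 ≤ ⟪u, p - c⟫ := by
  obtain ⟨hsub, hmin⟩ := hSEB
  have hne : P.Nonempty := Finset.card_pos.mp (by omega)
  obtain ⟨p₀, hp₀, q₀, hq₀, hpq⟩ := Finset.one_lt_card.mp hP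
  have hr : 0 < r := by
    have h1 : dist p₀ c ≤ r := hsub hp₀
    have h2 : dist q₀ c ≤ r := hsub hq₀
    have h3 := dist_triangle p₀ c q₀
    have h4 : dist c q₀ = dist q₀ c := dist_comm c q₀
    have hd : 0 < dist p₀ q₀ := dist_pos.mpr hpq
    linarith
  refine ⟨hr, fun u hu => ?_⟩
  by_contra hcon
  push_neg at hcon
  have key : ∀ p ∈ P, ∃ δ > 0, ∀ ε : ℝ, 0 < ε → ε ≤ δ → dist p (c - ε • u) < r := by
    intro p hp
    have hpr : dist p c ≤ r := hsub hp
    have hdist : ∀ ε : ℝ, 0 ≤ ε → dist p (c - ε • u) ^ 2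
        = dist p c ^ 2 + 2 * ε * ⟪u, p - c⟫ + ε ^ 2 := by
      intro ε hε
      have hrw : p - (c - ε • u) = (p - c) + ε • u := by abel
      rw [dist_eq_norm, hrw, norm_add_sq_real, real_inner_smul_right, norm_smul,
        real_inner_comm, ← dist_eq_norm]
      simp [hu, abs_of_nonneg hε]
      ring
    rcases eq_or_lt_of_le hpr with heq | hlt
    · have hip := hcon p hp heq
      refine ⟨-⟪u, p - c⟫, by linarith, fun ε hε hεle => ?_⟩
      have h2 := hdist ε hε.le
      apply lt_of_pow_lt_pow_left₀ 2 hr.le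
      rw [h2, heq]
      nlinarith
    · refine ⟨min 1 ((r ^ 2 - dist p c ^ 2) / (2 * (2 * r + 1))), ?_, fun ε hε hεle => ?_⟩
      · have h5 : 0 < r ^ 2 - dist p c ^ 2 := by
          nlinarith [dist_nonneg (x := p) (y := c)]
        positivity
      · have h2 := hdist ε hε.le
        apply lt_of_pow_lt_pow_left₀ 2 hr.le
        rw [h2]
        have hip : ⟪u, p - c⟫ ≤ r := by
          calc ⟪u, p - c⟫ ≤ ‖u‖ * ‖p - c‖ := real_inner_le_norm u (p - c)
          _ ≤ r := by rw [hu, one_mul, ← dist_eq_norm]; exact hpr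
        have he1 : ε ≤ 1 := le_trans hεle (min_le_left _ _)
        have he2 : ε ≤ (r ^ 2 - dist p c ^ 2) / (2 * (2 * r + 1)) :=
          le_trans hεle (min_le_right _ _)
        have he3 : ε * (2 * (2 * r + 1)) ≤ r ^ 2 - dist p c ^ 2 := by
          rw [← le_div_iff₀ (by linarith)]; exact he2
        have hipe : ε * ⟪u, p - c⟫ ≤ ε * r := mul_le_mul_of_nonneg_left hip hε.le
        have hsq : ε ^ 2 ≤ ε := by nlinarith
        have hd2 : dist p c ^ 2 < r ^ 2 := by
          nlinarith [dist_nonneg (x := p) (y := c)]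
        linarith
  choose δ hδpos hδ using key
  have hatt : P.attach.Nonempty := Finset.attach_nonempty_iff.mpr hne
  set ε : ℝ := P.attach.inf' hatt (fun p => δ p.1 p.2) with hε
  have hεpos : 0 < ε := by
    rw [hε, Finset.lt_inf'_iff]
    exact fun p _ => hδpos p.1 p.2
  have hεle : ∀ p (hp : p ∈ P), ε ≤ δ p hp := fun p hp =>
    Finset.inf'_le _ (Finset.mem_attach _ ⟨p, hp⟩)
  have hlt : ∀ p ∈ P, dist p (c - ε • u) < r := fun p hp =>
    hδ p hp ε hεpos (hεle p hp)
  have hsub' : (↑P : Set _) ⊆ closedBall (c - ε • u)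
      (P.sup' hne (fun p => dist p (c - ε • u))) := by
    intro x hx
    have hx' : x ∈ P := hx
    exact mem_closedBall.mpr (Finset.le_sup' (fun p => dist p (c - ε • u)) hx')
  have h6 := hmin _ _ hsub'
  have h7 : P.sup' hne (fun p => dist p (c - ε • u)) < r :=
    Finset.sup'_lt_iff hne |>.mpr hlt
  linarith
end

section
/- Let M ∈ EuclideanSpace ℝ (Fin 3), R > 0, let N = closedBall(M, R), and let C = {x ∈ N : ⟪u, x − M⟫ ≥ s} be a spherical cap of N determined by a unit vector u and a real number s, with diam(C) ≤ 1/4. Let P ⊆ N be a finite set of at least 2 points and let closedBall(c, r) be a smallest enclosing ball of P. If c ∈ C, then r ≤ 1/4. -/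
open Metric
open scoped RealInnerProductSpace

lemma exists_support {E : Type*} [NormedAddCommGroup E] [InnerProductSpace ℝ E]
    (P : Finset E) (hP : P.Nonempty) (c u : E) (hu : ‖u‖ = 1) (r : ℝ)
    (hSEB : IsSEB (↑P : Set E) c r) :
    ∃ p ∈ P, r ≤ dist p c ∧ 0 ≤ ⟪u, p - c⟫ := by
  by_contra h
  push_neg at h
  have hr0 : 0 ≤ r := by
    obtain ⟨p, hp⟩ := hP
    exact le_trans dist_nonneg (mem_closedBall.mp (hSEB.1 (Finset.mem_coe.mpr hp)))
  set g : E → ℝ := fun p => if 0 ≤ ⟪u, p - c⟫ then r - dist p c else -2 * ⟪u, p - c⟫ with hg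
  have hgpos : ∀ p ∈ P, 0 < g p := by
    intro p hp
    by_cases ht : 0 ≤ ⟪u, p - c⟫
    · have hd : dist p c < r := by
        by_contra hd
        exact absurd ht (not_le.mpr (h p hp (not_lt.mp hd)))
      simp only [hg, if_pos ht]
      linarith
    · push_neg at ht
      simp only [hg, if_neg (not_le.mpr ht)]
      linarith
  have hinf : 0 < P.inf' hP g := (Finset.lt_inf'_iff hP).mpr hgpos
  set ε := (P.inf' hP g) / 2 with hε
  have hεpos : 0 < ε := by positivity
  have key : ∀ p ∈ P, dist p (c - ε • u) < r := by
    intro p hp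
    have hεg : ε < g p := lt_of_lt_of_le (by rw [hε]; linarith) (Finset.inf'_le g hp)
    have hpc : dist p c ≤ r := mem_closedBall.mp (hSEB.1 (Finset.mem_coe.mpr hp))
    by_cases ht : 0 ≤ ⟪u, p - c⟫
    · have hgp : g p = r - dist p c := by simp only [hg, if_pos ht]
      calc dist p (c - ε • u) ≤ dist p c + dist c (c - ε • u) := dist_triangle _ _ _
        _ = dist p c + ε := by
            rw [dist_eq_norm]
            simp [norm_smul, hu, abs_of_pos hεpos]
        _ < r := by rw [hgp] at hεg; linarith
    · push_neg at ht
      have hgp : g p = -2 * ⟪u, p - c⟫ := by simp only [hg, if_neg (not_le.mpr ht)]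
      have hexp : dist p (c - ε • u) ^ 2
          = dist p c ^ 2 + 2 * (ε * ⟪u, p - c⟫) + ε ^ 2 := by
        rw [dist_eq_norm, dist_eq_norm]
        have h1 : p - (c - ε • u) = (p - c) + ε • u := by abel
        rw [h1, norm_add_sq_real, real_inner_smul_right, real_inner_comm,
          norm_smul, hu]
        simp [abs_of_pos hεpos]
      have hsq : dist p (c - ε • u) ^ 2 < r ^ 2 := by
        have h2 : dist p c ^ 2 ≤ r ^ 2 := pow_le_pow_left₀ dist_nonneg hpc 2
        rw [hgp] at hεg
        nlinarith
      have := lt_of_pow_lt_pow_left₀ 2 hr0 hsq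
      exact this
  set r' := P.sup' hP (fun p => dist p (c - ε • u)) with hr'
  have hsub : (↑P : Set E) ⊆ closedBall (c - ε • u) r' := by
    intro p hp
    exact mem_closedBall.mpr (Finset.le_sup' (fun q => dist q (c - ε • u)) (Finset.mem_coe.mp hp))
  have h1 : r ≤ r' := hSEB.2 _ _ hsub
  have h2 : r' < r := (Finset.sup'_lt_iff hP).mpr key
  linarith

theorem stmt4 (M : EuclideanSpace ℝ (Fin 3)) (R : ℝ) (hR : 0 < R)
    (u : EuclideanSpace ℝ (Fin 3)) (hu : ‖u‖ = 1) (s : ℝ)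
    (C : Set (EuclideanSpace ℝ (Fin 3)))
    (hC : C = {x ∈ closedBall M R | ⟪u, x - M⟫ ≥ s})
    (hdiam : diam C ≤ 1 / 4)
    (P : Finset (EuclideanSpace ℝ (Fin 3))) (hPN : ↑P ⊆ closedBall M R)
    (hPcard : 2 ≤ P.card)
    (c : EuclideanSpace ℝ (Fin 3)) (r : ℝ) (hSEB : IsSEB (↑P) c r)
    (hc : c ∈ C) :
    r ≤ 1 / 4 := by
  have hP : P.Nonempty := Finset.card_pos.mp (by omega)
  obtain ⟨p, hpP, hrd, hip⟩ := exists_support P hP c u hu r hSEB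
  have hcC := hc
  rw [hC] at hcC
  obtain ⟨hcN, hcs⟩ := hcC
  have hpC : p ∈ C := by
    rw [hC]
    refine ⟨hPN (Finset.mem_coe.mpr hpP), ?_⟩
    have hsplit : ⟪u, p - M⟫ = ⟪u, p - c⟫ + ⟪u, c - M⟫ := by
      rw [← inner_add_right]
      congr 1
      abel
    rw [hsplit]
    linarith [hcs]
  have hbdd : Bornology.IsBounded C := by
    apply (isBounded_closedBall (x := M) (r := R)).subset
    rw [hC]; exact fun x hx => hx.1
  have := dist_le_diam_of_mem hbdd hpC hc
  linarith
end

section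
/- Let M ∈ EuclideanSpace ℝ (Fin 3), R > 0, let N = closedBall(M, R), and let C = {x ∈ N : ⟪u, x − M⟫ ≥ s} be a spherical cap of N determined by a unit vector u and a real number s, with diam(C) ≤ 1/4. Let P ⊆ N be a finite set of at least 2 points and let closedBall(c, r) be a smallest enclosing ball of P. If there exist a point A ∈ C and a point B ∈ P with dist(A, B) > 1/2, then c ∉ C. -/
open Metric
open scoped RealInnerProductSpace

set_option maxHeartbeats 1000000 in
theorem stmt5 (M : EuclideanSpace ℝ (Fin 3)) (R : ℝ) (hR : 0 < R)
    (u : EuclideanSpace ℝ (Fin 3)) (hu : ‖u‖ = 1) (s : ℝ)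
    (C : Set (EuclideanSpace ℝ (Fin 3)))
    (hC : C = {x ∈ closedBall M R | ⟪u, x - M⟫ ≥ s})
    (hdiam : diam C ≤ 1 / 4)
    (P : Finset (EuclideanSpace ℝ (Fin 3))) (hPN : ↑P ⊆ closedBall M R)
    (hPcard : 2 ≤ P.card)
    (c : EuclideanSpace ℝ (Fin 3)) (r : ℝ) (hSEB : IsSEB (↑P) c r)
    (A : EuclideanSpace ℝ (Fin 3)) (hA : A ∈ C)
    (B : EuclideanSpace ℝ (Fin 3)) (hB : B ∈ P) (hAB : dist A B > 1 / 2) :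
    c ∉ C := by
  intro hc
  obtain ⟨hPc, hmin⟩ := hSEB
  have hCbdd : Bornology.IsBounded C := by
    rw [hC]; exact isBounded_closedBall.subset (fun x hx => hx.1)
  have hcA : dist c A ≤ 1 / 4 := (dist_le_diam_of_mem hCbdd hc hA).trans hdiam
  have hcB : dist B c ≤ r := mem_closedBall.1 (hPc (Finset.mem_coe.2 hB))
  have htri : dist A B ≤ dist A c + dist c B := dist_triangle A c B
  have hr14 : 1 / 4 < r := by
    have h1 : dist A c = dist c A := dist_comm A c
    have h2 : dist c B = dist B c := dist_comm c B
    linarith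
  -- decomposition of inner products
  have hinner : ∀ p : EuclideanSpace ℝ (Fin 3), ⟪u, p - M⟫ = ⟪u, p - c⟫ + ⟪u, c - M⟫ := by
    intro p
    rw [← inner_add_right, sub_add_sub_cancel]
  obtain ⟨hcN, hcs⟩ : c ∈ closedBall M R ∧ ⟪u, c - M⟫ ≥ s := by rwa [hC] at hc
  -- points of P on the upper side of c are in C, hence close to c
  have hkey : ∀ p ∈ P, 0 ≤ ⟪u, p - c⟫ → dist p c ≤ 1 / 4 := by
    intro p hp hpu
    have hpC : p ∈ C := by
      rw [hC]
      refine ⟨hPN hp, ?_⟩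
      rw [hinner p]
      linarith
    exact (dist_le_diam_of_mem hCbdd hpC hc).trans hdiam
  have hPne : P.Nonempty := ⟨B, hB⟩
  classical
  set T := P.filter (fun p => ⟪u, p - c⟫ < 0) with hT
  set δ : ℝ := if hTne : T.Nonempty then min (T.inf' hTne (fun p => -⟪u, p - c⟫)) ((r - 1/4)/2)
    else (r - 1/4)/2 with hδ
  have hδpos : 0 < δ := by
    rw [hδ]
    split
    · rename_i hTne
      refine lt_min ?_ (by linarith)
      rw [Finset.lt_inf'_iff]
      intro p hp
      have := (Finset.mem_filter.1 hp).2
      linarith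
    · linarith
  have hδr : δ ≤ (r - 1/4)/2 := by
    rw [hδ]; split
    · exact min_le_right _ _
    · exact le_refl _
  set c' := c - δ • u with hc'
  have hdcc' : dist c c' = δ := by
    rw [hc', dist_eq_norm, sub_sub_cancel, norm_smul, hu, mul_one,
      Real.norm_eq_abs, abs_of_pos hδpos]
  have hdist : ∀ p ∈ P, dist p c' < r := by
    intro p hp
    by_cases hpu : 0 ≤ ⟪u, p - c⟫
    · calc dist p c' ≤ dist p c + dist c c' := dist_triangle p c c'
        _ ≤ 1/4 + δ := by linarith [hkey p hp hpu, hdcc'.le]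
        _ < r := by linarith
    · -- p ∈ T
      push_neg at hpu
      have hpT : p ∈ T := Finset.mem_filter.2 ⟨hp, hpu⟩
      have hδle : δ ≤ -⟪u, p - c⟫ := by
        have hTne : T.Nonempty := ⟨p, hpT⟩
        rw [hδ, dif_pos hTne]
        exact (min_le_left _ _).trans (Finset.inf'_le _ hpT)
      have hsq : ‖p - c'‖^2 = ‖p - c‖^2 + 2 * δ * ⟪u, p - c⟫ + δ^2 := by
        have hexp : p - c' = (p - c) + δ • u := by rw [hc']; abel
        rw [hexp, norm_add_sq_real, real_inner_smul_right, real_inner_comm,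
          norm_smul, Real.norm_eq_abs, hu, mul_one, sq_abs]
        ring
      have hpc : ‖p - c‖ ≤ r := by
        have h := mem_closedBall.1 (hPc (Finset.mem_coe.2 hp))
        rwa [dist_eq_norm] at h
      have h1 : ‖p - c'‖^2 < r^2 := by
        have h2 : 2 * δ * ⟪u, p - c⟫ ≤ -2 * δ * δ := by nlinarith
        nlinarith [norm_nonneg (p - c), hr14]
      rw [dist_eq_norm]
      nlinarith [norm_nonneg (p - c'), h1, hr14]
  set r' := P.sup' hPne (fun p => dist p c') with hr'
  have hle : r ≤ r' := by
    refine hmin c' r' ?_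
    intro p hp
    exact mem_closedBall.2 (Finset.le_sup' (fun p => dist p c') (Finset.mem_coe.1 hp))
  have hlt : r' < r := by
    rw [hr', Finset.sup'_lt_iff]
    exact hdist
  linarith
end

section
/- Let M ∈ EuclideanSpace ℝ (Fin 3), R > 0, let N = closedBall(M, R), and let C = {x ∈ N : ⟪u, x − M⟫ ≥ s} be a spherical cap of N determined by a unit vector u and a real number s, with diam(C) ≤ 1/4. Let P ⊆ N be a finite set of at least 2 points whose smallest enclosing ball has center c ∈ C. Then for all points p, q ∈ P, the line segment from p to c is contained in the closed ball of radius 1/2 around the midpoint (p + q)/2. (This expresses that a robot whose Go-To-The-Center target lies in C cannot be hindered from reaching it by the connectivity-preserving limit balls.) -/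
open Metric
open scoped RealInnerProductSpace

set_option maxHeartbeats 1000000 in
theorem stmt7 (M : EuclideanSpace ℝ (Fin 3)) (R : ℝ) (hR : 0 < R)
    (u : EuclideanSpace ℝ (Fin 3)) (hu : ‖u‖ = 1) (s : ℝ)
    (C : Set (EuclideanSpace ℝ (Fin 3)))
    (hC : C = {x ∈ closedBall M R | ⟪u, x - M⟫ ≥ s})
    (hdiam : diam C ≤ 1 / 4)
    (P : Finset (EuclideanSpace ℝ (Fin 3))) (hPN : ↑P ⊆ closedBall M R)
    (hPcard : 2 ≤ P.card)
    (c : EuclideanSpace ℝ (Fin 3)) (r : ℝ) (hSEB : IsSEB (↑P) c r)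
    (hc : c ∈ C) :
    ∀ p ∈ P, ∀ q ∈ P, segment ℝ p c ⊆ closedBall (midpoint ℝ p q) (1 / 2) := by
  have hC_sub : C ⊆ closedBall M R := by rw [hC]; intro x hx; exact hx.1
  have hcN : c ∈ closedBall M R := hC_sub hc
  set d : ℝ := ‖c - M‖ with hd
  have hdR : d ≤ R := by rw [hd, ← dist_eq_norm]; exact mem_closedBall.1 hcN
  have hd0 : 0 ≤ d := norm_nonneg _
  -- a unit vector orthogonal to u
  obtain ⟨v, hvu, hv1⟩ : ∃ v : EuclideanSpace ℝ (Fin 3), ⟪u, v⟫ = 0 ∧ ‖v‖ = 1 := by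
    have hu0 : u ≠ 0 := by intro h; rw [h, norm_zero] at hu; norm_num at hu
    have hfr : 0 < Module.finrank ℝ ((ℝ ∙ u)ᗮ : Submodule ℝ (EuclideanSpace ℝ (Fin 3))) := by
      have h1 := Submodule.finrank_add_finrank_orthogonal (K := ℝ ∙ u)
      rw [finrank_span_singleton hu0, finrank_euclideanSpace_fin] at h1
      omega
    obtain ⟨⟨w, hwmem⟩, hw0⟩ := Module.finrank_pos_iff_exists_ne_zero.1 hfr
    have hw0' : w ≠ 0 := by simpa [Submodule.mk_eq_zero] using hw0
    refine ⟨‖w‖⁻¹ • w, ?_, ?_⟩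
    · rw [real_inner_smul_right]
      have := (Submodule.mem_orthogonal _ w).1 hwmem u (Submodule.mem_span_singleton_self u)
      rw [this]; ring
    · rw [norm_smul, norm_inv, norm_norm]
      field_simp [norm_ne_zero_iff.2 hw0']
  set a : ℝ := ⟪u, c - M⟫ with ha
  have has : s ≤ a := by rw [hC] at hc; exact hc.2
  have haC : |a| ≤ d := by
    calc |a| ≤ ‖u‖ * ‖c - M‖ := abs_real_inner_le_norm u (c - M)
    _ = d := by rw [hu, one_mul]
  have hRd : 0 ≤ R ^ 2 - d ^ 2 := by
    have := abs_nonneg a; nlinarith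
  set t : ℝ := Real.sqrt (R ^ 2 - d ^ 2) with ht
  have ht0 : 0 ≤ t := Real.sqrt_nonneg _
  have ht2 : t ^ 2 = R ^ 2 - d ^ 2 := Real.sq_sqrt hRd
  -- the two extreme points of the cap
  have hx : ∀ e : ℝ, |e| = 1 → M + a • u + (e * t) • v ∈ C := by
    intro e he
    rw [hC]
    have hsub : M + a • u + (e * t) • v - M = a • u + (e * t) • v := by abel
    constructor
    · rw [mem_closedBall, dist_eq_norm, hsub]
      have hnsq : ‖a • u + (e * t) • v‖ ^ 2 = a ^ 2 + (e * t) ^ 2 := by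
        rw [norm_add_sq_real, norm_smul, norm_smul, real_inner_smul_left,
          real_inner_smul_right, hvu, hu, hv1]
        simp [mul_pow, sq_abs]
      have he2 : e ^ 2 = 1 := by rw [← sq_abs, he]; norm_num
      have h1 : ‖a • u + (e * t) • v‖ ^ 2 ≤ R ^ 2 := by
        rw [hnsq, mul_pow, he2]
        nlinarith [mul_self_le_mul_self (abs_nonneg a) haC, sq_abs a, ht2]
      nlinarith [norm_nonneg (a • u + (e * t) • v)]
    · show s ≤ ⟪u, _⟫
      rw [hsub, inner_add_right, real_inner_smul_right, real_inner_smul_right, hvu,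
        real_inner_self_eq_norm_sq, hu]
      simpa using has
  have hdiam' : 2 * t ≤ 1 / 4 := by
    have h1 := hx 1 (by norm_num)
    have h2 := hx (-1) (by norm_num)
    have hb : Bornology.IsBounded C := (isBounded_closedBall).subset hC_sub
    have hdle := dist_le_diam_of_mem hb h1 h2
    have heq : dist (M + a • u + ((1:ℝ) * t) • v) (M + a • u + ((-1:ℝ) * t) • v) = 2 * t := by
      rw [dist_eq_norm]
      have : (M + a • u + ((1:ℝ) * t) • v) - (M + a • u + ((-1:ℝ) * t) • v) = (2 * t) • v := by
        rw [show (2 * t : ℝ) = 1 * t - (-1 * t) by ring, sub_smul]; abel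
      rw [this, norm_smul, hv1, mul_one, Real.norm_eq_abs, abs_of_nonneg (by linarith)]
    rw [heq] at hdle
    linarith
  have ht8 : t ≤ 1 / 8 := by linarith
  -- bound on r
  have hr0 : 0 ≤ r := by
    obtain ⟨p, hp⟩ := Finset.card_pos.mp (by omega : 0 < P.card)
    have := hSEB.1 (Finset.mem_coe.2 hp)
    exact le_trans dist_nonneg (mem_closedBall.1 this)
  have key : ∀ δ : ℝ, 0 < δ → δ ≤ 1 → r ^ 2 ≤ R ^ 2 - d ^ 2 + δ * d ^ 2 := by
    intro δ hδ hδ1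
    set ρ2 : ℝ := r ^ 2 * (1 - δ) + δ * (R ^ 2 - d ^ 2) + δ ^ 2 * d ^ 2 with hρ2
    have hρ2nn : 0 ≤ ρ2 := by nlinarith
    have hsub : (↑P : Set _) ⊆ closedBall (c - δ • (c - M)) (Real.sqrt ρ2) := by
      intro p hp
      have hpc : dist p c ≤ r := mem_closedBall.1 (hSEB.1 hp)
      have hpM : dist p M ≤ R := mem_closedBall.1 (hPN hp)
      rw [dist_eq_norm] at hpc hpM
      have hdec : p - M = (p - c) + (c - M) := by abel
      have hM2 : ‖p - M‖ ^ 2 = ‖p - c‖ ^ 2 + 2 * ⟪p - c, c - M⟫ + d ^ 2 := by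
        rw [hdec, norm_add_sq_real]
      have hip : ⟪p - c, c - M⟫ ≤ (R ^ 2 - d ^ 2 - ‖p - c‖ ^ 2) / 2 := by
        nlinarith [norm_nonneg (p - M), norm_nonneg (p - c)]
      rw [mem_closedBall, dist_eq_norm]
      have hdec2 : p - (c - δ • (c - M)) = (p - c) + δ • (c - M) := by
        rw [smul_sub]; abel
      have hn2 : ‖p - (c - δ • (c - M))‖ ^ 2
          = ‖p - c‖ ^ 2 + 2 * (δ * ⟪p - c, c - M⟫) + δ ^ 2 * d ^ 2 := by
        rw [hdec2, norm_add_sq_real, real_inner_smul_right, norm_smul,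
          Real.norm_eq_abs, abs_of_pos hδ, mul_pow]
      have hn2r : ‖p - c‖ ^ 2 ≤ r ^ 2 := by
        nlinarith [mul_self_le_mul_self (norm_nonneg (p - c)) hpc]
      have hle : ‖p - (c - δ • (c - M))‖ ^ 2 ≤ ρ2 := by
        rw [hn2, hρ2]
        have h1 : δ * ⟪p - c, c - M⟫ ≤ δ * ((R ^ 2 - d ^ 2 - ‖p - c‖ ^ 2) / 2) :=
          mul_le_mul_of_nonneg_left hip hδ.le
        have h2 : 0 ≤ (1 - δ) * (r ^ 2 - ‖p - c‖ ^ 2) :=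
          mul_nonneg (by linarith) (by linarith)
        nlinarith
      have := Real.sqrt_le_sqrt hle
      rwa [Real.sqrt_sq (norm_nonneg _)] at this
    have hrle := hSEB.2 _ _ hsub
    have : r ^ 2 ≤ ρ2 := by
      have h2 : Real.sqrt ρ2 ^ 2 = ρ2 := Real.sq_sqrt hρ2nn
      nlinarith [Real.sqrt_nonneg ρ2]
    rw [hρ2] at this
    nlinarith
  have hkey : r ^ 2 ≤ R ^ 2 - d ^ 2 := by
    by_contra h
    push_neg at h
    rcases eq_or_lt_of_le hd0 with hd0' | hdpos
    · have := key 1 one_pos le_rfl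
      rw [← hd0'] at this h
      nlinarith
    · set η : ℝ := r ^ 2 - (R ^ 2 - d ^ 2) with hη
      have hηpos : 0 < η := by rw [hη]; linarith
      set δ : ℝ := min 1 (η / (2 * d ^ 2)) with hδ
      have hδpos : 0 < δ := lt_min one_pos (by positivity)
      have hδ1 : δ ≤ 1 := min_le_left _ _
      have := key δ hδpos hδ1
      have hδle : δ * d ^ 2 ≤ η / 2 := by
        have h1 : δ ≤ η / (2 * d ^ 2) := min_le_right _ _
        have h2 : 0 < d ^ 2 := by positivity
        calc δ * d ^ 2 ≤ (η / (2 * d ^ 2)) * d ^ 2 := by nlinarith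
        _ = η / 2 := by field_simp
      rw [hη] at hηpos hδle
      linarith
  have hr8 : r ≤ 1 / 8 := by nlinarith
  -- conclusion
  intro p hp q hq
  have hpc : dist p c ≤ r := mem_closedBall.1 (hSEB.1 hp)
  have hqc : dist q c ≤ r := mem_closedBall.1 (hSEB.1 hq)
  have hpq : dist p q ≤ 2 * r := by
    calc dist p q ≤ dist p c + dist c q := dist_triangle _ _ _
    _ ≤ r + r := by rw [dist_comm c q]; linarith
    _ = 2 * r := by ring
  apply (convex_closedBall (midpoint ℝ p q) (1 / 2)).segment_subset
  · rw [mem_closedBall, dist_left_midpoint]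
    have : ‖(2:ℝ)‖ = 2 := by norm_num
    rw [this]
    linarith
  · rw [mem_closedBall]
    have hle : dist (midpoint ℝ c c) (midpoint ℝ p q) ≤ (dist c p + dist c q) / 2 :=
      dist_midpoint_midpoint_le c c p q
    rw [midpoint_self, dist_comm c p] at hle
    calc dist c (midpoint ℝ p q) ≤ (dist p c + dist c q) / 2 := hle
    _ ≤ 1 / 2 := by rw [dist_comm c q]; linarith
end

section
/- For all real numbers θ ∈ [0, 1] and α ∈ [0, π], the inequality cos(α·θ) + cos(α·(1 − θ)) ≥ 2(α − π)²/π² holds. -/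
open Real

theorem stmt9 (θ α : ℝ) (hθ : θ ∈ Set.Icc (0 : ℝ) 1) (hα : α ∈ Set.Icc (0 : ℝ) π) :
    cos (α * θ) + cos (α * (1 - θ)) ≥ 2 * (α - π) ^ 2 / π ^ 2 := by
  obtain ⟨hθ0, hθ1⟩ := hθ
  obtain ⟨hα0, hαπ⟩ := hα
  have hπ := pi_pos
  -- sum to product
  have hsum : cos (α * θ) + cos (α * (1 - θ)) = 2 * cos (α / 2) * cos (α * (θ - 1/2)) := by
    have := Real.cos_add (α / 2) (α * (θ - 1/2))
    have := Real.cos_sub (α / 2) (α * (θ - 1/2))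
    have h1 : α * θ = α / 2 + α * (θ - 1/2) := by ring
    have h2 : α * (1 - θ) = α / 2 - α * (θ - 1/2) := by ring
    rw [h1, h2, Real.cos_add, Real.cos_sub]; ring
  have hcoshalf : 0 ≤ cos (α / 2) :=
    Real.cos_nonneg_of_mem_Icc ⟨by linarith, by linarith⟩
  have habs : |α * (θ - 1/2)| ≤ α / 2 := by
    rw [abs_mul, abs_of_nonneg hα0]
    have : |θ - 1/2| ≤ 1/2 := by rw [abs_le]; constructor <;> linarith
    nlinarith
  have hmono : cos (α / 2) ≤ cos (α * (θ - 1/2)) := by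
    rw [← Real.cos_abs (α * (θ - 1/2))]
    exact Real.cos_le_cos_of_nonneg_of_le_pi (abs_nonneg _) (by linarith) habs
  have hstep : cos (α * θ) + cos (α * (1 - θ)) ≥ 2 * cos (α / 2) ^ 2 := by
    rw [hsum]; nlinarith
  -- Jordan: sin((π-α)/2) ≥ (π-α)/π
  have hj : 2 / π * ((π - α) / 2) ≤ sin ((π - α) / 2) :=
    Real.mul_le_sin (by linarith) (by linarith)
  have hcs : cos (α / 2) = sin ((π - α) / 2) := by
    rw [← Real.cos_pi_div_two_sub]; ring_nf
  have h1 : (π - α) / π ≤ cos (α / 2) := by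
    rw [hcs]
    calc (π - α) / π = 2 / π * ((π - α) / 2) := by field_simp
    _ ≤ _ := hj
  have h2 : ((π - α) / π) ^ 2 ≤ cos (α / 2) ^ 2 := by
    apply sq_le_sq' <;> nlinarith [div_nonneg (by linarith : (0:ℝ) ≤ π - α) hπ.le]
  calc 2 * (α - π) ^ 2 / π ^ 2 = 2 * ((π - α) / π) ^ 2 := by field_simp; ring
    _ ≤ 2 * cos (α / 2) ^ 2 := by linarith
    _ ≤ _ := hstep
end

section
/- Let E be a real inner product space and let p, q : ℝ → E be curves such that p has derivative v and q has derivative w at time t (HasDerivAt), and p(t) ≠ q(t). Then the function s ↦ dist(p(s), q(s)) has derivative −(‖v‖·cos ∠(v, q(t) − p(t)) + ‖w‖·cos ∠(w, p(t) − q(t))) at t, where ∠ denotes the angle between two vectors (InnerProductGeometry.angle). -/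
open Real InnerProductGeometry
open scoped RealInnerProductSpace

/-! Differentiating `√(‖p - q‖²)` gives `⟪p t - q t, v - w⟫ / ‖p t - q t‖`, and
`‖v‖ cos ∠(v, u) = ⟪v, u⟫ / ‖u‖` is the component of `v` along `u`; splitting the inner product
into the contributions of `v` and `w` gives the two cosine terms. -/

section

variable {E : Type*} [NormedAddCommGroup E] [InnerProductSpace ℝ E]

-- For `y = 0` both sides vanish: `angle x 0 = π / 2` and `a / 0 = 0`.
theorem norm_mul_cos_angle (x y : E) : ‖x‖ * cos (angle x y) = ⟪x, y⟫ / ‖y‖ := by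
  rcases eq_or_ne x 0 with rfl | hx
  · simp
  · rw [cos_angle, mul_div_assoc', mul_div_mul_left _ _ (norm_ne_zero_iff.2 hx)]

theorem HasDerivAt.norm {f : ℝ → E} {f' : E} {t : ℝ} (hf : HasDerivAt f f' t) (h0 : f t ≠ 0) :
    HasDerivAt (fun s => ‖f s‖) (⟪f t, f'⟫ / ‖f t‖) t := by
  have hsq : HasDerivAt (fun s => √(‖f s‖ ^ 2)) (2 * ⟪f t, f'⟫ / (2 * √(‖f t‖ ^ 2))) t :=
    hf.norm_sq.sqrt (by positivity)
  simpa only [sqrt_sq (norm_nonneg _), mul_div_mul_left _ _ (two_ne_zero (α := ℝ))] using hsq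

theorem HasDerivAt.dist {p q : ℝ → E} {v w : E} {t : ℝ} (hp : HasDerivAt p v t)
    (hq : HasDerivAt q w t) (hpq : p t ≠ q t) :
    HasDerivAt (fun s => dist (p s) (q s)) (⟪p t - q t, v - w⟫ / ‖p t - q t‖) t := by
  simpa only [dist_eq_norm, Pi.sub_apply] using (hp.sub hq).norm (sub_ne_zero.2 hpq)

end

theorem stmt10 {E : Type*} [NormedAddCommGroup E] [InnerProductSpace ℝ E]
    (p q : ℝ → E) (v w : E) (t : ℝ)
    (hp : HasDerivAt p v t) (hq : HasDerivAt q w t) (hpq : p t ≠ q t) :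
    HasDerivAt (fun s => dist (p s) (q s))
      (-(‖v‖ * cos (angle v (q t - p t)) + ‖w‖ * cos (angle w (p t - q t)))) t := by
  convert hp.dist hq hpq using 1
  rw [norm_mul_cos_angle, norm_mul_cos_angle, ← neg_sub (p t), norm_neg, inner_neg_right,
    real_inner_comm _ v, real_inner_comm _ w, inner_sub_right]
  ring
end

section
/- Let P be a finite set of points in a real inner product space, let p ∈ P be a point that is not in the convex hull of P \ {p} (i.e. p is a vertex of the convex hull of P), and let n be a nonzero vector. Then the hyperplane through p with normal n intersects the convex hull of P only in the point p — that is, {x ∈ convexHull ℝ P : ⟪n, x − p⟫ = 0} = {p} — if and only if either ⟪n, q − p⟫ > 0 for all q ∈ P with q ≠ p, or ⟪n, q − p⟫ < 0 for all q ∈ P with q ≠ p. (Equivalently, the plane is a tangential plane at p if and only if the angle between one of its normal vectors and every segment from p to another point of P is strictly less than π/2.) -/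
open scoped RealInnerProductSpace

private lemma aux11 {E : Type*} [NormedAddCommGroup E] [InnerProductSpace ℝ E]
    (P : Finset E) (p : E) (hp : p ∈ P) (n : E)
    (hpos : ∀ q ∈ P, q ≠ p → 0 < ⟪n, q - p⟫) :
    {x ∈ convexHull ℝ (↑P : Set E) | ⟪n, x - p⟫ = 0} = {p} := by
  ext x
  simp only [Set.mem_setOf_eq, Set.mem_singleton_iff]
  constructor
  · rintro ⟨hx, hinner⟩
    rw [Finset.convexHull_eq] at hx
    obtain ⟨w, hw0, hw1, hx⟩ := hx
    rw [P.centerMass_eq_of_sum_1 _ hw1] at hx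
    have hxp : x - p = ∑ q ∈ P, w q • (q - p) := by
      rw [← hx]
      simp only [smul_sub, Finset.sum_sub_distrib, ← Finset.sum_smul, hw1, one_smul, id]
    have hsum : ∑ q ∈ P, w q * ⟪n, q - p⟫ = 0 := by
      rw [← hinner, hxp, inner_sum]
      simp [real_inner_smul_right]
    have hzero : ∀ q ∈ P, q ≠ p → w q = 0 := by
      intro q hq hne
      have h := (Finset.sum_eq_zero_iff_of_nonneg ?_).mp hsum q hq
      · rcases mul_eq_zero.mp h with h | h
        · exact h
        · exact absurd h (ne_of_gt (hpos q hq hne))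
      · intro r hr
        rcases eq_or_ne r p with rfl | hrp
        · simp
        · exact mul_nonneg (hw0 r hr) (le_of_lt (hpos r hr hrp))
    have : x - p = 0 := by
      rw [hxp]
      apply Finset.sum_eq_zero
      intro q hq
      rcases eq_or_ne q p with rfl | hqp
      · simp
      · rw [hzero q hq hqp, zero_smul]
    exact sub_eq_zero.mp this
  · rintro rfl
    exact ⟨subset_convexHull ℝ _ hp, by simp⟩

theorem stmt11 {E : Type*} [NormedAddCommGroup E] [InnerProductSpace ℝ E]
    (P : Finset E) (p : E) (hp : p ∈ P)
    (hvert : p ∉ convexHull ℝ ((↑P : Set E) \ {p}))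
    (n : E) (hn : n ≠ 0) :
    {x ∈ convexHull ℝ (↑P : Set E) | ⟪n, x - p⟫ = 0} = {p} ↔
      ((∀ q ∈ P, q ≠ p → 0 < ⟪n, q - p⟫) ∨ (∀ q ∈ P, q ≠ p → ⟪n, q - p⟫ < 0)) := by
  constructor
  · intro hset
    by_contra hcon
    push_neg at hcon
    obtain ⟨⟨q, hq, hqp, hqa⟩, ⟨r, hr, hrp, hrb⟩⟩ := hcon
    set a := ⟪n, q - p⟫ with ha
    set b := ⟪n, r - p⟫ with hb
    have hale : a ≤ 0 := hqa
    have hble : 0 ≤ b := hrb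
    -- find x on segment [q,r] with inner zero
    have key : ∃ x ∈ segment ℝ q r, ⟪n, x - p⟫ = 0 := by
      rcases eq_or_lt_of_le (sub_nonneg.mpr (hale.trans hble)) with heq | hlt
      · refine ⟨q, left_mem_segment ℝ q r, ?_⟩
        have : a = 0 := le_antisymm hale (by linarith [heq.symm ▸ (sub_nonneg.mpr (hale.trans hble))] )
        -- a = b from b - a = 0
        nlinarith [heq]
      · set t := b / (b - a) with ht
        have ht0 : 0 ≤ t := div_nonneg hble (le_of_lt hlt)
        have ht1 : t ≤ 1 := by
          rw [div_le_one hlt]; linarith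
        refine ⟨t • q + (1 - t) • r, ?_, ?_⟩
        · exact ⟨t, 1 - t, ht0, by linarith, by ring, rfl⟩
        · have : (t • q + (1 - t) • r) - p = t • (q - p) + (1 - t) • (r - p) := by
            module
          rw [this, inner_add_right, real_inner_smul_right, real_inner_smul_right, ← ha, ← hb, ht]
          field_simp
          ring
    obtain ⟨x, hxseg, hxinner⟩ := key
    have hsub : segment ℝ q r ⊆ convexHull ℝ ((↑P : Set E) \ {p}) := by
      rw [← convexHull_pair]
      apply convexHull_mono
      intro y hy
      rcases hy with rfl | rfl
      · exact ⟨hq, hqp⟩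
      · exact ⟨hr, hrp⟩
    have hxP : x ∈ convexHull ℝ (↑P : Set E) :=
      convexHull_mono Set.diff_subset (hsub hxseg)
    have hxne : x ≠ p := fun h => hvert (h ▸ hsub hxseg)
    have hmem : x ∈ ({p} : Set E) :=
      hset ▸ (⟨hxP, hxinner⟩ : x ∈ {x ∈ convexHull ℝ (↑P : Set E) | ⟪n, x - p⟫ = 0})
    exact hxne hmem
  · rintro (h | h)
    · exact aux11 P p hp n h
    · have := aux11 P p hp (-n) (fun q hq hne => by
        rw [inner_neg_left]; linarith [h q hq hne])
      rw [← this]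
      ext x
      simp only [Set.mem_setOf_eq, inner_neg_left, neg_eq_zero]
end
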